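/- arXiv:1812.00484 — 7 statements merged into one kernel-verified Lean document; each statement's English description precedes it below -/
import Mathlib

section
/- In the topology on T ∪ {∞} whose open sets are the nice upper sets, the singleton {∞} is not locally closed (not the intersection of an open set and a closed set). -/
open Topology TopologicalSpace Set

/-- The hyperspace of compact subsets (including `∅`) of `X`. -/
def Kt (X : Type*) [TopologicalSpace X] : Type _ := {A : Set X // IsCompact A}

/-- The Vietoris topology on the hyperspace, generated by the sets
`U⁺ = {A : A ⊆ U}` and `U⁻ = {A : A ∩ U ≠ ∅}` for `U` open. -/
instance Kt.topology (X : Type*) [TopologicalSpace X] : TopologicalSpace (Kt X) :=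
  TopologicalSpace.generateFrom
    ({S | ∃ U : Set X, IsOpen U ∧ S = {A : Kt X | A.1 ⊆ U}} ∪
     {S | ∃ U : Set X, IsOpen U ∧ S = {A : Kt X | (A.1 ∩ U).Nonempty}})

/-- The Hilbert cube `[0,1]^ω`. -/
abbrev HilbertCube : Type := ℕ → unitInterval

open scoped Classical in
/-- The type of a space: the pair (number of connected components, number of
nondegenerate components) if the number of components is finite; `none` (= `∞`) otherwise. -/
noncomputable def typeOf (K : Type*) [TopologicalSpace K] : Option (ℕ × ℕ) :=
  if Finite (ConnectedComponents K) then
    some (Nat.card (ConnectedComponents K),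
      Nat.card {c : ConnectedComponents K |
        ¬ ({x : K | ConnectedComponents.mk x = c} : Set K).Subsingleton})
  else none

/-- The order on the type poset `T ∪ {∞}` (`none` plays the role of `∞`):
`(0,0)` is comparable only with itself, positive finite types are ordered by the
product order, and `∞` is above every positive finite type. -/
def tle : Option (ℕ × ℕ) → Option (ℕ × ℕ) → Prop
  | none, none => True
  | none, some _ => False
  | some p, none => 0 < p.1
  | some p, some q => (p = (0, 0) ∧ q = (0, 0)) ∨ (0 < p.1 ∧ p.1 ≤ q.1 ∧ p.2 ≤ q.2)

/-- Membership in the type poset `T ∪ {∞}`: finite types are pairs `(m, n)` with `m ≥ n`. -/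
def isType : Option (ℕ × ℕ) → Prop
  | none => True
  | some p => p.2 ≤ p.1

/-- The type poset `T ∪ {∞}` as a type. -/
abbrev TP : Type := {o : Option (ℕ × ℕ) // isType o}

/-- The order on the type poset. -/
def TP.le (a b : TP) : Prop := tle a.1 b.1

/-- `R` is an upper set in the type poset. -/
def IsUpperSetTP (R : Set TP) : Prop := ∀ a b : TP, a ∈ R → TP.le a b → b ∈ R

/-- `R` is nice: if it meets `T₊ ∪ {∞}`, then it contains `(m, 0)` for some `m > 0`. -/
def NiceSet (R : Set TP) : Prop :=
  (∃ a ∈ R, a.1 ≠ some (0, 0)) →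
    ∃ m : ℕ, 0 < m ∧ (⟨some (m, 0), Nat.zero_le m⟩ : TP) ∈ R

/-- A set is open in the topology of nice upper sets. -/
def OpenTP (R : Set TP) : Prop := IsUpperSetTP R ∧ NiceSet R

/-- A set is closed in the topology of nice upper sets. -/
def ClosedTP (R : Set TP) : Prop := OpenTP Rᶜ

/-- A set is locally closed: the intersection of an open set and a closed set. -/
def LocallyClosedTP (S : Set TP) : Prop := ∃ U C : Set TP, OpenTP U ∧ ClosedTP C ∧ S = U ∩ C

/-!
Niceness puts some `(m, 0)` with `m > 0` into every open set containing `∞`, while a closed set,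
being a lower set, contains every such `(m, 0)` as soon as it contains `∞`. Hence every locally
closed set containing `∞` contains a finite type as well.
-/

theorem ClosedTP.mem_of_le {C : Set TP} (hC : ClosedTP C) {a b : TP} (hab : TP.le a b)
    (hb : b ∈ C) : a ∈ C :=
  by_contra fun ha => hC.1 a b ha hab hb

theorem LocallyClosedTP.exists_pos_mem_of_none_mem {S : Set TP} (hS : LocallyClosedTP S)
    (hinf : ⟨none, trivial⟩ ∈ S) : ∃ m : ℕ, 0 < m ∧ (⟨some (m, 0), Nat.zero_le m⟩ : TP) ∈ S := by
  obtain ⟨U, C, hU, hC, rfl⟩ := hS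
  obtain ⟨m, hm, hmU⟩ := hU.2 ⟨_, hinf.1, nofun⟩
  exact ⟨m, hm, hmU, hC.mem_of_le (b := ⟨none, trivial⟩) hm hinf.2⟩

theorem stmt8 :
    ¬ LocallyClosedTP ({⟨none, trivial⟩} : Set TP) := fun h =>
  let ⟨_, _, hm⟩ := h.exists_pos_mem_of_none_mem rfl
  nomatch congrArg Subtype.val (mem_singleton_iff.mp hm)
end

section
/- In the topology on T ∪ {∞} of nice upper sets: the singleton {(0,0)} is clopen, the singleton {(1,0)} is closed, and for every t ∈ T₊ with t ≠ (1,0), the singleton {t} is locally closed but neither open nor closed. -/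
open Topology TopologicalSpace Set

/-! A singleton `{a}` is an upper set iff `a` is maximal, and its complement is one iff `a` is
minimal. `(0, 0)` is both maximal and minimal, and `(1, 0)` is minimal. Every other `t ∈ T₊` lies strictly above `(1, 0)`
and strictly below `∞`, so neither `{t}` nor its complement is an upper set. -/

lemma tle_trans {a b c : Option (ℕ × ℕ)} (hab : tle a b) (hbc : tle b c) : tle a c := by
  cases a <;> cases b <;> cases c <;> simp_all [tle, Prod.ext_iff] <;> omega

lemma tle_antisymm {a b : Option (ℕ × ℕ)} (hab : tle a b) (hba : tle b a) : a = b := by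
  cases a <;> cases b <;> simp_all [tle, Prod.ext_iff]
  omega

namespace TP

lemma le_refl (a : TP) : a.le a := by
  obtain ⟨_ | ⟨m, n⟩, h⟩ := a
  · trivial
  · change n ≤ m at h
    change (_ ∧ _) ∨ _
    simp only [Prod.ext_iff]
    omega

lemma le_trans {a b c : TP} (hab : a.le b) (hbc : b.le c) : a.le c := tle_trans hab hbc

lemma le_antisymm {a b : TP} (hab : a.le b) (hba : b.le a) : a = b :=
  Subtype.ext (tle_antisymm hab hba)

lemma le_zero_zero_iff (b : TP) : b.le ⟨some (0, 0), le_rfl⟩ ↔ b = ⟨some (0, 0), le_rfl⟩ := by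
  refine ⟨fun h => Subtype.ext ?_, fun h => h ▸ b.le_refl⟩
  obtain ⟨_ | ⟨m, n⟩, _⟩ := b
  · exact h.elim
  · simp only [le, tle, Option.some.injEq, Prod.ext_iff] at h ⊢
    omega

lemma zero_zero_le_iff (b : TP) : TP.le ⟨some (0, 0), le_rfl⟩ b ↔ b = ⟨some (0, 0), le_rfl⟩ := by
  refine ⟨fun h => Subtype.ext ?_, fun h => h ▸ b.le_refl⟩
  obtain ⟨_ | ⟨m, n⟩, _⟩ := b
  · exact absurd h (lt_irrefl 0)
  · simp only [le, tle, Option.some.injEq, Prod.ext_iff] at h ⊢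
    omega

lemma le_one_zero_iff (b : TP) : b.le ⟨some (1, 0), zero_le_one⟩ ↔ b = ⟨some (1, 0), zero_le_one⟩ := by
  refine ⟨fun h => Subtype.ext ?_, fun h => h ▸ b.le_refl⟩
  obtain ⟨_ | ⟨m, n⟩, _⟩ := b
  · exact h.elim
  · simp only [le, tle, Option.some.injEq, Prod.ext_iff] at h ⊢
    omega

lemma one_zero_le {m n : ℕ} (hnm : n ≤ m) (hm : 0 < m) :
    TP.le ⟨some (1, 0), zero_le_one⟩ ⟨some (m, n), hnm⟩ := by
  simp only [le, tle]
  omega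

lemma le_top {m n : ℕ} (hnm : n ≤ m) (hm : 0 < m) : TP.le ⟨some (m, n), hnm⟩ ⟨none, trivial⟩ := hm

end TP

lemma isUpperSetTP_singleton_iff (a : TP) : IsUpperSetTP {a} ↔ ∀ b, a.le b → b = a :=
  ⟨fun h b hab => h a b rfl hab, fun h _ b ha hab => h b (ha ▸ hab)⟩

lemma isUpperSetTP_compl_singleton_iff (a : TP) : IsUpperSetTP {a}ᶜ ↔ ∀ b, b.le a → b = a := by
  refine ⟨fun h b hba => ?_, fun h c b hc hcb hb => hc (h c (hb ▸ hcb))⟩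
  by_contra hb
  exact h b a hb hba rfl

lemma isUpperSetTP_setOf_le (a : TP) : IsUpperSetTP {b | a.le b} :=
  fun _ _ hb hbc => TP.le_trans hb hbc

lemma isUpperSetTP_setOf_lt (a : TP) : IsUpperSetTP {b | a.le b ∧ b ≠ a} := by
  rintro b c ⟨hab, hba⟩ hbc
  refine ⟨TP.le_trans hab hbc, fun hca => hba (TP.le_antisymm (hca ▸ hbc) hab)⟩

lemma IsUpperSetTP.union {R S : Set TP} (hR : IsUpperSetTP R) (hS : IsUpperSetTP S) :
    IsUpperSetTP (R ∪ S) := by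
  rintro a b (ha | ha) hab
  exacts [Or.inl (hR a b ha hab), Or.inr (hS a b ha hab)]

lemma niceSet_of_mem {R : Set TP} {m : ℕ} (hm : 0 < m) (hR : ⟨some (m, 0), m.zero_le⟩ ∈ R) :
    NiceSet R :=
  fun _ => ⟨m, hm, hR⟩

lemma openTP_union_setOf_le {R : Set TP} (hR : IsUpperSetTP R) {m : ℕ} (hm : 0 < m) :
    OpenTP (R ∪ {b | TP.le ⟨some (m, 0), m.zero_le⟩ b}) :=
  ⟨hR.union (isUpperSetTP_setOf_le _), niceSet_of_mem hm (Or.inr (mem_ofPred.2 (TP.le_refl _)))⟩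

lemma closedTP_singleton {a : TP} (ha : ∀ b, b.le a → b = a) {m : ℕ} (hm : 0 < m)
    (hma : (⟨some (m, 0), m.zero_le⟩ : TP) ≠ a) : ClosedTP {a} :=
  ⟨(isUpperSetTP_compl_singleton_iff a).2 ha, niceSet_of_mem hm hma⟩

/-- `(m, n)` is cut out of the nice upper set `↑(m, n) ∪ ↑(m + 1, 0)` by removing the nice
upper set `(↑(m, n) \ {(m, n)}) ∪ ↑(m + 1, 0)`; adding `↑(m + 1, 0)` makes both nice without
reaching `(m, n)`. -/
lemma locallyClosedTP_singleton {m n : ℕ} (hnm : n ≤ m) :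
    LocallyClosedTP {⟨some (m, n), hnm⟩} := by
  set t : TP := ⟨some (m, n), hnm⟩
  set s : Set TP := {b | TP.le ⟨some (m + 1, 0), (m + 1).zero_le⟩ b}
  refine ⟨{b | t.le b} ∪ s, ({b | t.le b ∧ b ≠ t} ∪ s)ᶜ,
    openTP_union_setOf_le (isUpperSetTP_setOf_le t) m.succ_pos, ?_, ?_⟩
  · rw [ClosedTP, compl_compl]
    exact openTP_union_setOf_le (isUpperSetTP_setOf_lt t) m.succ_pos
  · have ht : t ∉ s := by simp [s, t, TP.le, tle]
    ext b
    constructor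
    · rintro rfl
      exact ⟨Or.inl t.le_refl, by simp [ht]⟩
    · rintro ⟨hb | hb, hbU⟩
      · by_contra hbt
        exact hbU (Or.inl ⟨hb, hbt⟩)
      · exact absurd (Or.inr hb) hbU

lemma not_openTP_singleton {m n : ℕ} (hnm : n ≤ m) (hm : 0 < m) :
    ¬ OpenTP {⟨some (m, n), hnm⟩} := fun h => by
  have := (isUpperSetTP_singleton_iff _).1 h.1 _ (TP.le_top hnm hm)
  simp [Subtype.ext_iff] at this

lemma not_closedTP_singleton {m n : ℕ} (hnm : n ≤ m) (hm : 0 < m) (hne : (m, n) ≠ (1, 0)) :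
    ¬ ClosedTP {⟨some (m, n), hnm⟩} := fun h => by
  have := (isUpperSetTP_compl_singleton_iff _).1 h.1 _ (TP.one_zero_le hnm hm)
  simp only [Subtype.ext_iff, Option.some.injEq] at this
  exact hne this.symm

theorem stmt9 :
    (OpenTP ({⟨some (0, 0), le_refl 0⟩} : Set TP) ∧
      ClosedTP ({⟨some (0, 0), le_refl 0⟩} : Set TP)) ∧
    ClosedTP ({⟨some (1, 0), Nat.zero_le 1⟩} : Set TP) ∧
    ∀ (m n : ℕ) (hnm : n ≤ m), 0 < m → (m, n) ≠ (1, 0) →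
      LocallyClosedTP ({⟨some (m, n), hnm⟩} : Set TP) ∧
      ¬ OpenTP ({⟨some (m, n), hnm⟩} : Set TP) ∧
      ¬ ClosedTP ({⟨some (m, n), hnm⟩} : Set TP) := by
  refine ⟨⟨⟨?_, ?_⟩, ?_⟩, ?_, fun m n hnm hm hne => ⟨locallyClosedTP_singleton hnm,
    not_openTP_singleton hnm hm, not_closedTP_singleton hnm hm hne⟩⟩
  · exact (isUpperSetTP_singleton_iff _).2 fun b => (TP.zero_zero_le_iff b).1
  · rintro ⟨a, rfl, ha⟩
    exact absurd rfl ha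
  · exact closedTP_singleton (fun b => (TP.le_zero_zero_iff b).1) one_pos (by simp [Subtype.ext_iff])
  · exact closedTP_singleton (fun b => (TP.le_one_zero_iff b).1) two_pos (by simp [Subtype.ext_iff])
end

section
/- Let X be a metrizable space, let F be a compact subfamily of the hyperspace K(X), and let U ⊆ X be open such that every member of F meets U. Then there exists a closed subset A ⊆ X with A ⊆ U such that every member of F meets A. -/
open Topology TopologicalSpace Set

/-! Every point of `U` has a closed neighbourhood inside `U`. The interiors of these
neighbourhoods give open hit-sets `{K | K ∩ V ≠ ∅}` covering `F`; by compactness finitely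
many suffice, and the union of the corresponding closed neighbourhoods is the required `A`. -/

section Vietoris

variable {X : Type*} [TopologicalSpace X]

theorem Kt.isOpen_setOf_inter_nonempty {V : Set X} (hV : IsOpen V) :
    IsOpen {A : Kt X | (A.1 ∩ V).Nonempty} :=
  .basic _ (Or.inr ⟨V, hV, rfl⟩)

theorem IsCompact.exists_finset_forall_inter_biUnion_nonempty {ι : Type*} {F : Set (Kt X)}
    (hF : IsCompact F) {V : ι → Set X} (hV : ∀ i, IsOpen (V i))
    (hmeet : ∀ K ∈ F, (K.1 ∩ ⋃ i, V i).Nonempty) :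
    ∃ t : Finset ι, ∀ K ∈ F, (K.1 ∩ ⋃ i ∈ t, V i).Nonempty := by
  obtain ⟨t, ht⟩ := hF.elim_finite_subcover (fun i ↦ {A : Kt X | (A.1 ∩ V i).Nonempty})
    (fun i ↦ Kt.isOpen_setOf_inter_nonempty (hV i)) fun K hK ↦ by
      simpa only [inter_iUnion, nonempty_iUnion, mem_iUnion, mem_ofPred_eq] using hmeet K hK
  refine ⟨t, fun K hK ↦ ?_⟩
  simpa only [inter_iUnion₂, nonempty_iUnion, mem_iUnion, mem_ofPred_eq] using ht hK

theorem IsCompact.exists_isClosed_subset_forall_inter_nonempty [RegularSpace X]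
    {F : Set (Kt X)} (hF : IsCompact F) {U : Set X} (hU : IsOpen U)
    (hmeet : ∀ K ∈ F, (K.1 ∩ U).Nonempty) :
    ∃ A : Set X, IsClosed A ∧ A ⊆ U ∧ ∀ K ∈ F, (K.1 ∩ A).Nonempty := by
  choose C hC_nhds hC_closed hC_sub using
    fun x : U ↦ exists_mem_nhds_isClosed_subset (hU.mem_nhds x.2)
  have hU_sub : U ⊆ ⋃ x : U, interior (C x) := fun x hx ↦
    mem_iUnion.2 ⟨⟨x, hx⟩, mem_interior_iff_mem_nhds.2 (hC_nhds ⟨x, hx⟩)⟩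
  obtain ⟨t, ht⟩ := hF.exists_finset_forall_inter_biUnion_nonempty (fun _ ↦ isOpen_interior)
    fun K hK ↦ (hmeet K hK).mono (inter_subset_inter_right _ hU_sub)
  refine ⟨⋃ x ∈ t, C x, isClosed_biUnion_finset fun x _ ↦ hC_closed x,
    iUnion₂_subset fun x _ ↦ hC_sub x, fun K hK ↦ (ht K hK).mono ?_⟩
  exact inter_subset_inter_right _ (iUnion₂_mono fun x _ ↦ interior_subset)

end Vietoris

theorem stmt10 {X : Type*} [TopologicalSpace X] [MetrizableSpace X]
    (F : Set (Kt X)) (hF : IsCompact F) (U : Set X) (hU : IsOpen U)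
    (hmeet : ∀ K ∈ F, (K.1 ∩ U).Nonempty) :
    ∃ A : Set X, IsClosed A ∧ A ⊆ U ∧ ∀ K ∈ F, (K.1 ∩ A).Nonempty :=
  hF.exists_isClosed_subset_forall_inter_nonempty hU hmeet
end

section
/- Let F be a finite subset of the Hilbert cube [0,1]^ω. For every separable metrizable space X with |X| ≥ |F| there exists a topological embedding f : X ↪ [0,1]^ω such that F ⊆ f[X]. -/
open Topology TopologicalSpace Set

/-!
Embed `X` into the Hilbert cube `Q` and postcompose with a continuous injection `Ψ : Q → Q`
sending the images of `|F|` chosen points of `X` onto `F`; as `Q` is compact, `Ψ` is a closed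
embedding.

To get `Ψ (z i) = y i`, take bumps `ν i` with disjoint supports, equal to `1` exactly at `z i`,
choose `m ≥ 2` such that the first `m` coordinates already separate the `y i`, and a centre
`Z ∈ (0,1)^m` on no line through two of the truncated `y i` (finitely many lines are nowhere
dense). Near `z i` put `Ψ x = (1 - ν i x) • (Z, x) + ν i x • y i`, where `(Z, x)` is `x` with `Z`
prepended. On the first `m` coordinates this is `Z + ν i x • (y i - Z)`, which determines `i`
and `ν i x` by the choice of `Z`; the remaining coordinates then recover `x`.
-/

open Filter Function

theorem eq_and_eq_of_smul_sub_eq_smul_sub {k V : Type*} [Field k] [AddCommGroup V] [Module k V]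
    {a b Z : V} {s t : k} (hZ : Z ∉ line[k, a, b]) (hs : s ≠ 0)
    (h : s • (a - Z) = t • (b - Z)) : a = b ∧ s = t := by
  by_cases hst : s = t
  · subst hst
    exact ⟨by simpa using smul_right_injective V hs h, rfl⟩
  refine absurd ?_ hZ
  have hst' : s - t ≠ 0 := sub_ne_zero.2 hst
  convert AffineMap.lineMap_mem_affineSpan_pair (-t / (s - t)) a b using 1
  rw [AffineMap.lineMap_apply_module]
  apply smul_right_injective V hst'
  have key : (s - t) • Z = s • a - t • b := by
    linear_combination (norm := module) -h
  simp only [key]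
  match_scalars
  · field_simp; ring
  · field_simp

theorem interior_affineSpan_pair_eq_empty {E : Type*} [NormedAddCommGroup E] [NormedSpace ℝ E]
    [FiniteDimensional ℝ E] (hE : 2 ≤ Module.finrank ℝ E) (a b : E) :
    interior (line[ℝ, a, b] : Set E) = ∅ := by
  by_contra hne
  have htop : line[ℝ, a, b] = ⊤ := top_unique <|
    (isOpen_interior.affineSpan_eq_top (nonempty_iff_ne_empty.2 hne)).symm.le.trans <|
      (affineSpan_mono ℝ interior_subset).trans (AffineSubspace.affineSpan_coe _).le
  have hdir : ℝ ∙ (a -ᵥ b) = ⊤ := by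
    rw [← vectorSpan_pair, ← direction_affineSpan, htop, AffineSubspace.direction_top]
  have := finrank_span_le_card (R := ℝ) ({a -ᵥ b} : Set E)
  rw [hdir, finrank_top, Set.toFinset_singleton, Finset.card_singleton] at this
  omega

theorem exists_mem_forall_notMem_affineSpan_pair {E ι : Type*} [NormedAddCommGroup E]
    [NormedSpace ℝ E] [FiniteDimensional ℝ E] [Finite ι] (hE : 2 ≤ Module.finrank ℝ E)
    (w : ι → E) {U : Set E} (hU : IsOpen U) (hne : U.Nonempty) :
    ∃ Z ∈ U, ∀ i j, Z ∉ line[ℝ, w i, w j] := by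
  have hdense : Dense (⋂ p : ι × ι, (line[ℝ, w p.1, w p.2] : Set E)ᶜ) := by
    refine dense_iInter_of_isOpen (fun p => ?_) fun p => ?_
    · exact ((AffineSubspace.isClosed_direction_iff (line[ℝ, w p.1, w p.2])).1
        (Submodule.closed_of_finiteDimensional _)).isOpen_compl
    · exact interior_eq_empty_iff_dense_compl.1 (interior_affineSpan_pair_eq_empty hE _ _)
  obtain ⟨Z, hZU, hZ⟩ := hdense.inter_open_nonempty U hU hne
  exact ⟨Z, hZU, fun i j => mem_iInter.1 hZ (i, j)⟩

theorem eventually_injective_restrict_fin {ι α : Type*} [Finite ι] {y : ι → ℕ → α}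
    (hy : Injective y) : ∀ᶠ m in atTop, Injective fun i (k : Fin m) => y i k := by
  have key : ∀ i i', ∀ᶠ m in atTop,
      (fun k : Fin m => y i k) = (fun k : Fin m => y i' k) → i = i' := by
    intro i i'
    by_cases h : i = i'
    · exact Eventually.of_forall fun _ _ => h
    obtain ⟨k, hk⟩ := Function.ne_iff.1 (hy.ne h)
    filter_upwards [eventually_gt_atTop k] with m hm heq
    exact absurd (congrFun heq ⟨k, hm⟩) hk
  filter_upwards [eventually_all.2 fun i => eventually_all.2 (key i)] with m hm i i'
  exact hm i i'

structure IsPeakedBumpFamily {ι M : Type*} [TopologicalSpace M] (z : ι → M) (ν : ι → M → ℝ) :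
    Prop where
  continuous : ∀ i, Continuous (ν i)
  nonneg : ∀ i x, 0 ≤ ν i x
  le_one : ∀ i x, ν i x ≤ 1
  eq_one_iff : ∀ i x, ν i x = 1 ↔ x = z i
  eq_of_ne_zero : ∀ {i i' x}, ν i x ≠ 0 → ν i' x ≠ 0 → i = i'

theorem exists_isPeakedBumpFamily {ι M : Type*} [Finite ι] [MetricSpace M] {z : ι → M}
    (hz : Injective z) : ∃ ν, IsPeakedBumpFamily z ν := by
  have hsep : ∀ᶠ δ in 𝓝[>] (0 : ℝ), ∀ i i', i ≠ i' → 2 * δ < dist (z i) (z i') := by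
    refine eventually_all.2 fun i => eventually_all.2 fun i' => ?_
    by_cases h : i = i'
    · exact Eventually.of_forall fun _ h' => absurd h h'
    have hd := dist_pos.2 (hz.ne h)
    filter_upwards [nhdsWithin_le_nhds (gt_mem_nhds (half_pos hd))] with δ hδ _
    linarith
  obtain ⟨δ, hsep, hδ⟩ := (hsep.and self_mem_nhdsWithin).exists
  have hδ : 0 < δ := hδ
  have hlt : ∀ i x, max 0 (1 - dist x (z i) / δ) ≠ 0 → dist x (z i) < δ := by
    intro i x h
    by_contra! hle
    exact h (max_eq_left (by rw [sub_nonpos, one_le_div hδ]; exact hle))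
  refine ⟨fun (i : ι) (x : M) => max 0 (1 - dist x (z i) / δ), fun i => ?_,
    fun i x => le_max_left _ _,
    fun i x => max_le zero_le_one (sub_le_self _ (div_nonneg dist_nonneg hδ.le)),
    fun i x => ?_, fun {i i' x} hi hi' => ?_⟩
  · fun_prop
  · refine ⟨fun h => ?_, by rintro rfl; simp⟩
    have h1 : 1 - dist x (z i) / δ = 1 := by
      rcases max_choice 0 (1 - dist x (z i) / δ) with h' | h' <;> rw [h'] at h
      · exact absurd h zero_ne_one
      · exact h
    simpa [hδ.ne'] using h1
  · by_contra h
    have := dist_triangle_left (z i) (z i') x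
    linarith [hsep i i' h, hlt i x hi, hlt i' x hi']

theorem IsPeakedBumpFamily.exists_forall_ne_eq_zero {ι M : Type*} [Nonempty ι]
    [TopologicalSpace M] {z : ι → M} {ν : ι → M → ℝ} (hν : IsPeakedBumpFamily z ν) (x : M) :
    ∃ i, ∀ i' ≠ i, ν i' x = 0 := by
  by_cases h : ∃ i, ν i x ≠ 0
  · obtain ⟨i, hi⟩ := h
    exact ⟨i, fun i' hi' => by_contra fun h' => hi' (hν.eq_of_ne_zero h' hi)⟩
  · push Not at h
    exact ⟨Classical.arbitrary ι, fun i' _ => h i'⟩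

def prependFin {m : ℕ} (Z : Fin m → ℝ) (v : ℕ → ℝ) : ℕ → ℝ :=
  fun k => if h : k < m then Z ⟨k, h⟩ else v (k - m)

@[simp]
theorem prependFin_apply_fin {m : ℕ} (Z : Fin m → ℝ) (v : ℕ → ℝ) (k : Fin m) :
    prependFin Z v k = Z k := by
  simp [prependFin]

@[simp]
theorem prependFin_apply_add {m : ℕ} (Z : Fin m → ℝ) (v : ℕ → ℝ) (k : ℕ) :
    prependFin Z v (m + k) = v k := by
  simp [prependFin]

theorem continuous_prependFin {m : ℕ} (Z : Fin m → ℝ) : Continuous (prependFin Z) :=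
  continuous_pi fun k => by
    unfold prependFin
    split_ifs
    exacts [continuous_const, continuous_apply _]

section BumpMix

variable {ι M : Type*} [Fintype ι] {m : ℕ} (Z : Fin m → ℝ)
  (j : M → HilbertCube) (ν : ι → M → ℝ) (y : ι → HilbertCube)

def bumpMix (x : M) : ℕ → ℝ :=
  (1 - ∑ i, ν i x) • prependFin Z (fun k => (j x k : ℝ)) + ∑ i, ν i x • fun k => (y i k : ℝ)

variable {Z j ν y}

theorem bumpMix_eq_of_forall_ne {x : M} {i : ι} (hi : ∀ i' ≠ i, ν i' x = 0) :
    bumpMix Z j ν y x =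
      (1 - ν i x) • prependFin Z (fun k => (j x k : ℝ)) + ν i x • fun k => (y i k : ℝ) := by
  rw [bumpMix, Finset.sum_eq_single i (fun i' _ h => hi i' h) (by simp),
    Finset.sum_eq_single i (fun i' _ h => by rw [hi i' h, zero_smul]) (by simp)]

variable [TopologicalSpace M] {z : ι → M} (hν : IsPeakedBumpFamily z ν)
include hν

theorem bumpMix_apply_self (i : ι) : bumpMix Z j ν y (z i) = fun k => (y i k : ℝ) := by
  have h1 : ν i (z i) = 1 := ((hν.eq_one_iff i _).2 rfl)
  rw [bumpMix_eq_of_forall_ne fun i' hi' => by_contra fun h => hi' (hν.eq_of_ne_zero h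
    (by rw [h1]; exact one_ne_zero)), h1]
  simp

theorem bumpMix_mem_Icc [Nonempty ι] (hZ : ∀ k, Z k ∈ Icc 0 1) (x : M) (k : ℕ) :
    bumpMix Z j ν y x k ∈ Icc 0 1 := by
  obtain ⟨i, hi⟩ := hν.exists_forall_ne_eq_zero x
  have hbase : prependFin Z (fun k => (j x k : ℝ)) k ∈ Icc 0 1 := by
    unfold prependFin
    split_ifs
    exacts [hZ _, (j x _).2]
  rw [bumpMix_eq_of_forall_ne hi]
  exact convex_Icc (0 : ℝ) 1 hbase (y i k).2 (sub_nonneg.2 (hν.le_one i x)) (hν.nonneg i x)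
    (sub_add_cancel 1 _)

theorem continuous_bumpMix (hj : Continuous j) : Continuous (bumpMix Z j ν y) := by
  have hc := hν.continuous
  have hjr : Continuous fun x k => (j x k : ℝ) :=
    continuous_pi fun k => continuous_subtype_val.comp ((continuous_apply k).comp hj)
  unfold bumpMix
  have := (continuous_prependFin Z).comp hjr
  fun_prop

theorem bumpMix_injective [Nonempty ι] (hj : Injective j)
    (hy : Injective fun i (k : Fin m) => (y i k : ℝ))
    (hZ : ∀ i i', Z ∉ line[ℝ, fun k : Fin m => (y i k : ℝ), fun k : Fin m => (y i' k : ℝ)]) :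
    Injective (bumpMix Z j ν y) := by
  intro u v huv
  obtain ⟨i, hi⟩ := hν.exists_forall_ne_eq_zero u
  obtain ⟨i', hi'⟩ := hν.exists_forall_ne_eq_zero v
  rw [bumpMix_eq_of_forall_ne hi, bumpMix_eq_of_forall_ne hi'] at huv
  set s := ν i u
  set t := ν i' v
  have hslot :
      s • ((fun k : Fin m => (y i k : ℝ)) - Z) = t • ((fun k : Fin m => (y i' k : ℝ)) - Z) := by
    funext k
    have := congrFun huv k
    simp only [Pi.add_apply, Pi.smul_apply, prependFin_apply_fin, smul_eq_mul] at this
    simp only [Pi.smul_apply, Pi.sub_apply, smul_eq_mul]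
    linarith
  have htail : ∀ k, (1 - s) * j u k + s * y i (m + k) = (1 - t) * j v k + t * y i' (m + k) := by
    intro k
    simpa using congrFun huv (m + k)
  obtain ⟨hst, hii'⟩ : s = t ∧ (s ≠ 0 → i = i') := by
    rcases eq_or_ne s 0 with hs | hs
    · rcases eq_or_ne t 0 with ht | ht
      · exact ⟨hs.trans ht.symm, fun h => absurd hs h⟩
      · exact absurd (eq_and_eq_of_smul_sub_eq_smul_sub (hZ i' i) ht hslot.symm).2 (hs ▸ ht)
    · obtain ⟨hyy, hst⟩ := eq_and_eq_of_smul_sub_eq_smul_sub (hZ i i') hs hslot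
      exact ⟨hst, fun _ => hy hyy⟩
  rw [← hst] at htail
  by_cases hs1 : s = 1
  · rw [(hν.eq_one_iff i u).1 hs1, (hν.eq_one_iff i' v).1 (hst.symm.trans hs1),
      hii' (by simp [hs1])]
  refine hj (funext fun k => Subtype.ext ?_)
  have hyk : s * y i (m + k) = s * y i' (m + k) := by
    rcases eq_or_ne s 0 with hs | hs
    · simp [hs]
    · rw [hii' hs]
  have hk : (1 - s) * (j u k - j v k) = 0 := by linear_combination htail k - hyk
  exact sub_eq_zero.1 ((mul_eq_zero.1 hk).resolve_left (sub_ne_zero.2 (Ne.symm hs1)))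

end BumpMix

theorem exists_continuous_injective_hilbertCube_apply_eq {ι M : Type*} [Finite ι]
    [MetricSpace M] {j : M → HilbertCube} (hj : Continuous j) (hj' : Injective j) {z : ι → M}
    (hz : Injective z) {y : ι → HilbertCube} (hy : Injective y) :
    ∃ Ψ : M → HilbertCube, Continuous Ψ ∧ Injective Ψ ∧ ∀ i, Ψ (z i) = y i := by
  cases isEmpty_or_nonempty ι
  · exact ⟨j, hj, hj', isEmptyElim⟩
  have := Fintype.ofFinite ι
  have hy' : Injective fun i k => (y i k : ℝ) :=
    fun i i' h => hy (funext fun k => Subtype.ext (congrFun h k))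
  obtain ⟨m, hm, hw⟩ :=
    ((eventually_ge_atTop 2).and (eventually_injective_restrict_fin hy')).exists
  obtain ⟨Z, hZ, hZline⟩ := exists_mem_forall_notMem_affineSpan_pair (E := Fin m → ℝ)
    (U := univ.pi fun _ => Ioo 0 1) (by simpa using hm) (fun i k => (y i k : ℝ))
    (isOpen_set_pi finite_univ fun _ _ => isOpen_Ioo) ⟨fun _ => 1 / 2, fun _ _ => by norm_num⟩
  obtain ⟨ν, hν⟩ := exists_isPeakedBumpFamily hz
  have hmem := bumpMix_mem_Icc (j := j) (y := y) hν fun k => Ioo_subset_Icc_self (hZ k trivial)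
  refine ⟨fun x k => ⟨bumpMix Z j ν y x k, hmem x k⟩, ?_, fun u v h => ?_, fun i => ?_⟩
  · exact continuous_pi fun k =>
      ((continuous_apply k).comp (continuous_bumpMix hν hj)).subtype_mk _
  · exact bumpMix_injective hν hj' hw hZline
      (funext fun k => congrArg Subtype.val (congrFun h k))
  · exact funext fun k => Subtype.ext (congrFun (bumpMix_apply_self hν i) k)

theorem stmt11 (F : Set HilbertCube) (hF : F.Finite) {X : Type*}
    [TopologicalSpace X] [MetrizableSpace X] [SeparableSpace X]
    (hcard : ∃ g : F → X, Function.Injective g) :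
    ∃ f : X → HilbertCube, IsEmbedding f ∧ F ⊆ Set.range f := by
  obtain ⟨g, hg⟩ := hcard
  have : Finite F := hF
  let _ := metrizableSpaceMetric X
  obtain ⟨e, he⟩ := Metric.PiNatEmbed.exists_embedding_to_hilbert_cube (X := X)
  let _ := metrizableSpaceMetric HilbertCube
  obtain ⟨Ψ, hΨ, hΨinj, hΨF⟩ := exists_continuous_injective_hilbertCube_apply_eq continuous_id
    injective_id (he.injective.comp hg) Subtype.val_injective
  exact ⟨Ψ ∘ e, (hΨ.isClosedEmbedding hΨinj).isEmbedding.comp he,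
    fun p hp => ⟨g ⟨p, hp⟩, hΨF ⟨p, hp⟩⟩⟩
end

section
/- The set of all subsets of [0,1]^ω homeomorphic to [0,1]^ω is dense in C([0,1]^ω) \ {∅}, the hyperspace of nonempty subcontinua of the Hilbert cube with the Vietoris topology. -/
/-!
Shrink the Vietoris neighbourhood of `A` to a basic one, `{B | B ⊆ U, B ∩ Vᵢ ≠ ∅ for all i}`.
Since the Hilbert cube is locally path-connected, the component of `U` containing `A` is
path-connected, so some path `γ` in `U` meets every `Vᵢ`. Choose `N` so large that the
cylinders of depth `N` around `γ` stay in `U`, and those around suitable points of `γ` stay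
in the `Vᵢ`. Then the image of `q ↦ (γ(q₀)₀, …, γ(q₀)_{N-1}, q₀, q₁, …)` is a copy of the
Hilbert cube in the neighbourhood.
-/

open Topology TopologicalSpace Set

open Filter PiNat

lemma Kt.exists_vietoris_basic_subset {X : Type*} [TopologicalSpace X] {𝒰 : Set (Kt X)}
    (hopen : IsOpen 𝒰) {A : Kt X} (hmem : A ∈ 𝒰) :
    ∃ (U : Set X) (𝒱 : Finset (Set X)), IsOpen U ∧ A.1 ⊆ U ∧
      (∀ V ∈ 𝒱, IsOpen V ∧ (A.1 ∩ V).Nonempty) ∧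
      ∀ B : Kt X, B.1 ⊆ U → (∀ V ∈ 𝒱, (B.1 ∩ V).Nonempty) → B ∈ 𝒰 := by
  classical
  induction hopen with
  | basic S hS =>
    rcases hS with ⟨U, hU, rfl⟩ | ⟨U, hU, rfl⟩
    · exact ⟨U, ∅, hU, hmem, by simp, fun B hB _ => hB⟩
    · exact ⟨univ, {U}, isOpen_univ, subset_univ _, by simpa using ⟨hU, hmem⟩,
        fun B _ h => h U (Finset.mem_singleton_self U)⟩
  | univ => exact ⟨univ, ∅, isOpen_univ, subset_univ _, by simp, by simp⟩
  | inter s t _ _ ihs iht =>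
    obtain ⟨U₁, 𝒱₁, hU₁, hAU₁, h𝒱₁, hB₁⟩ := ihs hmem.1
    obtain ⟨U₂, 𝒱₂, hU₂, hAU₂, h𝒱₂, hB₂⟩ := iht hmem.2
    refine ⟨U₁ ∩ U₂, 𝒱₁ ∪ 𝒱₂, hU₁.inter hU₂, subset_inter hAU₁ hAU₂, ?_, fun B hB hBV => ?_⟩
    · intro V hV
      rcases Finset.mem_union.1 hV with h | h
      exacts [h𝒱₁ V h, h𝒱₂ V h]
    · exact ⟨hB₁ B (hB.trans inter_subset_left) fun V hV => hBV V (Finset.mem_union_left _ hV),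
        hB₂ B (hB.trans inter_subset_right) fun V hV => hBV V (Finset.mem_union_right _ hV)⟩
  | sUnion T _ ihT =>
    obtain ⟨t, htT, hAt⟩ := hmem
    obtain ⟨U, 𝒱, hU, hAU, h𝒱, hB⟩ := ihT t htT hAt
    exact ⟨U, 𝒱, hU, hAU, h𝒱, fun B h1 h2 => ⟨t, htT, hB B h1 h2⟩⟩

section Paths

variable {X : Type*} [TopologicalSpace X]

lemma IsPathConnected.exists_path_meets {S : Set X} (hS : IsPathConnected S)
    (𝒱 : Finset (Set X)) (h𝒱 : ∀ V ∈ 𝒱, (S ∩ V).Nonempty) :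
    ∃ (x y : X) (γ : Path x y), range γ ⊆ S ∧ ∀ V ∈ 𝒱, (range γ ∩ V).Nonempty := by
  obtain ⟨x₀, hx₀⟩ := hS.nonempty
  choose p hp using h𝒱
  let e := 𝒱.equivFin
  obtain ⟨γ, hγS, hγp⟩ := hS.exists_path_through_family
    (Fin.cons x₀ fun i => p _ (e.symm i).2) (Fin.cases hx₀ fun i => (hp _ (e.symm i).2).1)
  refine ⟨_, _, γ, hγS, fun V hV => ⟨p V hV, ?_, (hp V hV).2⟩⟩
  simpa using hγp (e ⟨V, hV⟩).succ

lemma IsConnected.exists_path_meets_of_subset [LocallyPathConnectedSpace X] {A U : Set X}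
    (hA : IsConnected A) (hU : IsOpen U) (hAU : A ⊆ U)
    (𝒱 : Finset (Set X)) (h𝒱 : ∀ V ∈ 𝒱, (A ∩ V).Nonempty) :
    ∃ (x y : X) (γ : Path x y), range γ ⊆ U ∧ ∀ V ∈ 𝒱, (range γ ∩ V).Nonempty := by
  obtain ⟨a, ha⟩ := hA.nonempty
  have hC : IsPathConnected (connectedComponentIn U a) :=
    hU.connectedComponentIn.isConnected_iff_isPathConnected.1
      (isConnected_connectedComponentIn_iff.2 (hAU ha))
  have hAC : A ⊆ connectedComponentIn U a := hA.isPreconnected.subset_connectedComponentIn ha hAU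
  obtain ⟨x, y, γ, hγC, hγ𝒱⟩ :=
    hC.exists_path_meets 𝒱 fun V hV => (h𝒱 V hV).mono (inter_subset_inter_left V hAC)
  exact ⟨x, y, γ, hγC.trans (connectedComponentIn_subset U a), hγ𝒱⟩

end Paths

section Cylinders

variable {E : ℕ → Type*} [∀ n, TopologicalSpace (E n)]

lemma IsOpen.exists_cylinder_subset_nhds {U : Set (∀ n, E n)} (hU : IsOpen U) {x : ∀ n, E n}
    (hx : x ∈ U) : ∃ n, ∀ᶠ y in 𝓝 x, cylinder y n ⊆ U := by
  obtain ⟨I, u, hu, huU⟩ := isOpen_pi_iff.1 hU x hx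
  refine ⟨I.sup id + 1, mem_of_superset
    ((isOpen_set_pi I.finite_toSet fun i hi => (hu i hi).1).mem_nhds fun i hi => (hu i hi).2)
    fun y hy z hz => huU fun i hi => ?_⟩
  rw [mem_cylinder_iff.1 hz i (Nat.lt_succ_of_le (Finset.le_sup (f := id) hi))]
  exact hy i hi

lemma IsCompact.eventually_cylinder_subset {K U : Set (∀ n, E n)} (hK : IsCompact K)
    (hU : IsOpen U) (hKU : K ⊆ U) : ∀ᶠ n in atTop, ∀ x ∈ K, cylinder x n ⊆ U := by
  let W n := interior {y | cylinder y n ⊆ U}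
  have hW : Monotone W := fun m n hmn =>
    interior_mono fun y hy => (cylinder_anti y hmn).trans hy
  obtain ⟨n, hn⟩ := hK.elim_directed_cover W (fun n => isOpen_interior)
    (fun x hx => mem_iUnion.2 <| (hU.exists_cylinder_subset_nhds (hKU hx)).imp
      fun n hn => mem_interior_iff_mem_nhds.2 hn)
    hW.directed_le
  exact eventually_atTop.2 ⟨n, fun m hm x hx => interior_subset (hW hm (hn hx))⟩

end Cylinders

section Splice

variable {Y : Type*}

def splice (N : ℕ) (u v : ℕ → Y) : ℕ → Y := fun k => if k < N then u k else v (k - N)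

lemma splice_mem_cylinder (N : ℕ) (u v : ℕ → Y) : splice N u v ∈ cylinder u N :=
  fun _ hk => if_pos hk

lemma splice_add (N : ℕ) (u v : ℕ → Y) (k : ℕ) : splice N u v (N + k) = v k := by
  simp [splice]

variable [TopologicalSpace Y]

lemma Continuous.splice {Z : Type*} [TopologicalSpace Z] {f g : Z → ℕ → Y} (hf : Continuous f)
    (hg : Continuous g) (N : ℕ) : Continuous fun z => splice N (f z) (g z) := by
  refine continuous_pi fun k => ?_
  by_cases hk : k < N
  · simp only [_root_.splice, if_pos hk]
    fun_prop
  · simp only [_root_.splice, if_neg hk]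
    fun_prop

lemma isEmbedding_splice {g : (ℕ → Y) → ℕ → Y} (hg : Continuous g) (N : ℕ) :
    IsEmbedding fun v => splice N (g v) v :=
  Function.LeftInverse.isEmbedding (f := fun w k => w (N + k))
    (fun v => funext (splice_add N (g v) v)) (continuous_pi fun k => continuous_apply (N + k))
    (hg.splice continuous_id N)

end Splice

instance : LocallyPathConnectedSpace unitInterval :=
  (convex_Icc (0 : ℝ) 1).locallyPathConnectedSpace

instance : PathConnectedSpace unitInterval := .of_locallyPathConnectedSpace

theorem stmt12 (A : Kt HilbertCube) (hA : IsConnected A.1)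
    (𝒰 : Set (Kt HilbertCube)) (hopen : IsOpen 𝒰) (hmem : A ∈ 𝒰) :
    ∃ B ∈ 𝒰, IsConnected B.1 ∧ Nonempty (↥B.1 ≃ₜ HilbertCube) := by
  obtain ⟨U, 𝒱, hU, hAU, h𝒱, h𝒰⟩ := Kt.exists_vietoris_basic_subset hopen hmem
  obtain ⟨x, y, γ, hγU, hγ𝒱⟩ :=
    hA.exists_path_meets_of_subset hU hAU 𝒱 fun V hV => (h𝒱 V hV).2
  have hN : ∀ᶠ N in atTop, (∀ z ∈ range γ, cylinder z N ⊆ U) ∧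
      ∀ V ∈ 𝒱, ∃ z ∈ range γ, cylinder z N ⊆ V := by
    refine ((isCompact_range γ.continuous).eventually_cylinder_subset hU hγU).and
      ((eventually_all_finset 𝒱).2 fun V hV => ?_)
    obtain ⟨z, hzγ, hzV⟩ := hγ𝒱 V hV
    exact (isCompact_singleton.eventually_cylinder_subset (h𝒱 V hV).1
      (singleton_subset_iff.2 hzV)).mono fun N hN => ⟨z, hzγ, hN z rfl⟩
  obtain ⟨N, hNU, hN𝒱⟩ := hN.exists
  let F : HilbertCube → HilbertCube := fun q => splice N (γ (q 0)) q
  have hF : IsEmbedding F := isEmbedding_splice (γ.continuous.comp (continuous_apply 0)) N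
  refine ⟨⟨range F, isCompact_range hF.continuous⟩, h𝒰 _ ?_ fun V hV => ?_,
    isConnected_range hF.continuous, ⟨hF.toHomeomorph.symm⟩⟩
  · rintro _ ⟨q, rfl⟩
    exact hNU _ (mem_range_self _) (splice_mem_cylinder N _ q)
  · obtain ⟨_, ⟨t, rfl⟩, hV⟩ := hN𝒱 V hV
    exact ⟨F fun _ => t, ⟨fun _ => t, rfl⟩, hV (splice_mem_cylinder N _ _)⟩
end

section
/- Let X be a metrizable space and s : I → ℕ₊ a finite function. A compact set K ⊆ X has a Vietoris neighborhood of the shape s in K(X) if and only if K admits a decomposition into pairwise disjoint clopen sets {K_i : i ∈ I} with |K_i| ≥ s(i) for all i ∈ I. Consequently, the family O_s ∩ K(X) of all such compacta is open in K(X). -/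
/-!
A compactum `K` in a shape set `(⋃ U i)⁺ ∩ ⋂ (V i j)⁻` is cut by the disjoint open sets
`U i` into relatively clopen pieces `K ∩ U i`, and the `i`-th piece meets the `s i` disjoint sets
`V i j`, so it has at least `s i` points. Conversely, the clopen pieces of a decomposition of `K`
are disjoint compacta, which in a Hausdorff space have disjoint open neighbourhoods `U i`;
choosing `s i` points in the `i`-th piece and disjoint neighbourhoods of them inside `U i` yields
a shape set containing `K`. Shape sets are Vietoris open and all their members decompose, so the
family of decomposable compacta is open.
-/

open Topology TopologicalSpace Set

/-- `𝒰 ⊆ K(X)` is of the shape `s`: there are pairwise disjoint open sets `U i`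
and pairwise disjoint open sets `V i j ⊆ U i` for `j < s i` such that
`𝒰 = (⋃ i, U i)⁺ ∩ ⋂ i j, (V i j)⁻`. -/
def HasShapeS {X : Type*} [TopologicalSpace X] {I : Type*} (s : I → ℕ)
    (𝒰 : Set (Kt X)) : Prop :=
  ∃ U : I → Set X, (∀ i, IsOpen (U i)) ∧ Pairwise (Function.onFun Disjoint U) ∧
    ∃ V : (i : I) → Fin (s i) → Set X,
      (∀ i j, IsOpen (V i j)) ∧ (∀ i j, V i j ⊆ U i) ∧
      (∀ i, Pairwise (Function.onFun Disjoint (V i))) ∧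
      𝒰 = {A : Kt X | A.1 ⊆ (⋃ i, U i) ∧ ∀ i j, (A.1 ∩ V i j).Nonempty}

/-- `A` admits a decomposition into pairwise disjoint relatively clopen sets indexed by `I`
with the `i`-th piece of cardinality at least `s i`. -/
def MemOs {X : Type*} [TopologicalSpace X] {I : Type*} (s : I → ℕ) (A : Set X) : Prop :=
  ∃ P : I → Set ↥A, (∀ i, IsClopen (P i)) ∧ Pairwise (Function.onFun Disjoint P) ∧
    (⋃ i, P i) = Set.univ ∧ ∀ i, (s i : ℕ∞) ≤ (P i).encard

section

open Function

variable {X : Type*} [TopologicalSpace X]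

theorem exists_isOpen_superset_pairwise_disjoint [T2Space X] {ι : Type*} [Finite ι]
    {K : ι → Set X} (hK : ∀ i, IsCompact (K i)) (hd : Pairwise (Disjoint on K)) :
    ∃ U : ι → Set X, (∀ i, IsOpen (U i) ∧ K i ⊆ U i) ∧ Pairwise (Disjoint on U) :=
  (hd.mono fun i j h => separatedNhds_iff_disjoint.1 <|
    .of_isCompact_isCompact (hK i) (hK j) h).exists_mem_filter_basis_of_disjoint
    fun i => hasBasis_nhdsSet (K i)

theorem isClopen_of_pairwise_disjoint_open_cover {ι : Type*} {U : ι → Set X}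
    (hU : ∀ i, IsOpen (U i)) (hd : Pairwise (Disjoint on U)) (hcover : ⋃ i, U i = univ)
    (i : ι) : IsClopen (U i) := by
  refine ⟨isOpen_compl_iff.1 ?_, hU i⟩
  have : (U i)ᶜ = ⋃ (j) (_ : j ≠ i), U j := by
    ext x
    obtain ⟨k, hk⟩ := mem_iUnion.1 (hcover.symm ▸ mem_univ x : x ∈ ⋃ i, U i)
    simp only [mem_compl_iff, mem_iUnion, exists_prop]
    refine ⟨fun hx => ⟨k, fun h => hx (h ▸ hk), hk⟩, ?_⟩
    rintro ⟨j, hji, hj⟩ hx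
    exact disjoint_left.1 (hd hji) hj hx
  rw [this]
  exact isOpen_biUnion fun j _ => hU j

theorem natCast_le_encard_of_pairwise_disjoint {α : Type*} {S : Set α} {n : ℕ}
    {V : Fin n → Set α} (hd : Pairwise (Disjoint on V)) (hS : ∀ j, (S ∩ V j).Nonempty) :
    (n : ℕ∞) ≤ S.encard := by
  choose y hyS hyV using hS
  have hy : Injective fun j => (⟨y j, hyS j⟩ : S) := fun j k h => by
    have hjk : y j = y k := congrArg Subtype.val h
    by_contra hne
    exact disjoint_left.1 (hd hne) (hyV j) (hjk ▸ hyV k)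
  simpa using ENat.card_le_card_of_injective hy

theorem HasShapeS.isOpen {I : Type*} [Finite I] {s : I → ℕ} {𝒰 : Set (Kt X)}
    (h : HasShapeS s 𝒰) : IsOpen 𝒰 := by
  obtain ⟨U, hU, -, V, hV, -, -, rfl⟩ := h
  have hupper : IsOpen {A : Kt X | A.1 ⊆ ⋃ i, U i} :=
    isOpen_generateFrom_of_mem (Or.inl ⟨_, isOpen_iUnion hU, rfl⟩)
  have hlower (i) (j) : IsOpen {A : Kt X | (A.1 ∩ V i j).Nonempty} :=
    isOpen_generateFrom_of_mem (Or.inr ⟨_, hV i j, rfl⟩)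
  simp only [ofPred_and, ofPred_forall]
  exact hupper.inter (isOpen_iInter_of_finite fun i => isOpen_iInter_of_finite (hlower i))

theorem memOs_of_mem_of_hasShapeS {I : Type*} {s : I → ℕ} {𝒰 : Set (Kt X)} {K : Kt X}
    (hK : K ∈ 𝒰) (h : HasShapeS s 𝒰) : MemOs s K.1 := by
  obtain ⟨U, hU, hUd, V, -, hVU, hVd, rfl⟩ := h
  obtain ⟨hKU, hKV⟩ := hK
  have hcover : ⋃ i, ((↑) : K.1 → X) ⁻¹' U i = univ := by
    rw [← preimage_iUnion, preimage_eq_univ_iff, Subtype.range_coe]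
    exact hKU
  refine ⟨fun i => (↑) ⁻¹' U i,
    isClopen_of_pairwise_disjoint_open_cover (fun i => (hU i).preimage continuous_subtype_val)
      (fun i j hij => (hUd hij).preimage _) hcover,
    fun i j hij => (hUd hij).preimage _, hcover, fun i => ?_⟩
  refine natCast_le_encard_of_pairwise_disjoint (V := fun j => (↑) ⁻¹' V i j)
    (fun j k hjk => (hVd i hjk).preimage _) fun j => ?_
  obtain ⟨x, hxK, hxV⟩ := hKV i j
  exact ⟨⟨x, hxK⟩, hVU i j hxV, hxV⟩

theorem MemOs.exists_hasShapeS [T2Space X] {I : Type*} [Finite I] {s : I → ℕ} {K : Kt X}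
    (h : MemOs s K.1) : ∃ 𝒰 : Set (Kt X), K ∈ 𝒰 ∧ HasShapeS s 𝒰 := by
  obtain ⟨P, hPc, hPd, hPu, hPs⟩ := h
  have : CompactSpace K.1 := isCompact_iff_compactSpace.1 K.2
  obtain ⟨U, hU, hUd⟩ := exists_isOpen_superset_pairwise_disjoint
    (K := fun i => ((↑) : K.1 → X) '' P i)
    (fun i => (hPc i).isClosed.isCompact.image continuous_subtype_val)
    fun i j hij => (disjoint_image_iff Subtype.val_injective).2 (hPd hij)
  have hpoints (i) : ∃ x : Fin (s i) → X, Injective x ∧ ∀ j, x j ∈ K.1 ∧ x j ∈ U i := by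
    obtain ⟨e, -⟩ := Fin.Embedding.exists_embedding_disjoint_range_of_add_le_ENat_card
      (s := (∅ : Set (P i))) (by simpa using hPs i)
    exact ⟨fun j => (e j : K.1),
      Subtype.val_injective.comp (Subtype.val_injective.comp e.injective),
      fun j => ⟨(e j : K.1).2, (hU i).2 ⟨e j, (e j).2, rfl⟩⟩⟩
  choose x hxinj hxK hxU using hpoints
  have hseparate (i) := exists_isOpen_superset_pairwise_disjoint (K := fun j => {x i j})
    (fun j => isCompact_singleton) fun j k hjk => disjoint_singleton.2 ((hxinj i).ne hjk)
  choose W hW hWd using hseparate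
  have hKU : K.1 ⊆ ⋃ i, U i := fun a ha => by
    obtain ⟨i, hi⟩ := mem_iUnion.1 (hPu ▸ mem_univ (⟨a, ha⟩ : K.1))
    exact mem_iUnion.2 ⟨i, (hU i).2 ⟨_, hi, rfl⟩⟩
  refine ⟨{A | A.1 ⊆ ⋃ i, U i ∧ ∀ i j, (A.1 ∩ (W i j ∩ U i)).Nonempty},
    ⟨hKU, fun i j => ⟨x i j, hxK i j, (hW i j).2 rfl, hxU i j⟩⟩,
    U, fun i => (hU i).1, hUd, fun i j => W i j ∩ U i, fun i j => (hW i j).1.inter (hU i).1,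
    fun i j => inter_subset_right,
    fun i j k hjk => (hWd i hjk).mono inter_subset_left inter_subset_left, rfl⟩

end

theorem stmt15_general {X : Type*} [TopologicalSpace X] [MetrizableSpace X] {I : Type*}
    [Finite I] (s : I → ℕ) :
    (∀ K : Kt X, (∃ 𝒰 : Set (Kt X), K ∈ 𝒰 ∧ HasShapeS s 𝒰) ↔ MemOs s K.1) ∧
    IsOpen {K : Kt X | MemOs s K.1} := by
  have hshape (K : Kt X) : (∃ 𝒰 : Set (Kt X), K ∈ 𝒰 ∧ HasShapeS s 𝒰) ↔ MemOs s K.1 :=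
    ⟨fun ⟨_, hK, h⟩ => memOs_of_mem_of_hasShapeS hK h, MemOs.exists_hasShapeS⟩
  refine ⟨hshape, isOpen_iff_forall_mem_open.2 fun K hK => ?_⟩
  obtain ⟨𝒰, hK𝒰, h𝒰⟩ := (hshape K).2 hK
  exact ⟨𝒰, fun A hA => memOs_of_mem_of_hasShapeS hA h𝒰, h𝒰.isOpen, hK𝒰⟩

theorem stmt15 {X : Type*} [TopologicalSpace X] [MetrizableSpace X] {I : Type*}
    [Finite I] (s : I → ℕ) (hs : ∀ i, 0 < s i) :
    (∀ K : Kt X, (∃ 𝒰 : Set (Kt X), K ∈ 𝒰 ∧ HasShapeS s 𝒰) ↔ MemOs s K.1) ∧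
    IsOpen {K : Kt X | MemOs s K.1} :=
  stmt15_general s
end

section
/- Let s : I → ℕ₊ be a finite function and enumerate I = {i_k : k < |I|} so that k ↦ s(i_k) is increasing; let n(s) = |{i : s(i) > 1}|. For n ≤ n(s) set t_{s,n} = (n + Σ_{k < |I| - n} s(i_k), n). Then a metrizable compactum K admits a clopen decomposition {K_i : i ∈ I} with |K_i| ≥ s(i) for all i if and only if t(K) ≥ t_{s,n} for some n ≤ n(s). Moreover R_s = {t_{s,n} : n ≤ n(s)} is an antichain in the type poset. -/
open Topology TopologicalSpace Set

/-- `K` admits a decomposition into pairwise disjoint clopen sets indexed by `I`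
with the `i`-th piece of cardinality at least `s i`. -/
def HasDecomp (K : Type*) [TopologicalSpace K] {I : Type*} (s : I → ℕ) : Prop :=
  ∃ P : I → Set K, (∀ i, IsClopen (P i)) ∧ Pairwise (Function.onFun Disjoint P) ∧
    (⋃ i, P i) = Set.univ ∧ ∀ i, (s i : ℕ∞) ≤ (P i).encard

/-- `n(s)`: the number of indices with `s i > 1`. -/
noncomputable def nS {I : Type*} (s : I → ℕ) : ℕ := Nat.card {i : I // 1 < s i}

/-- The type `t_{s,n} = (n + Σ_{k < |I| - n} s(i_k), n)`. -/
def tsn {I : Type*} {N : ℕ} (e : Fin N ≃ I) (s : I → ℕ) (n : ℕ) : ℕ × ℕ :=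
  (n + ∑ k ∈ Finset.univ.filter (fun k : Fin N => (k : ℕ) < N - n), s (e k), n)

universe u

/-!
Because `K` is compact Hausdorff, its components are its quasi-components: `ConnectedComponents K`
is profinite, so any assignment of finitely many components to indices extends to a locally
constant map, i.e. to a clopen partition of `K`. A decomposition `{K_i}` is therefore the same as
a map `g` from components to `I` whose `i`-th fiber contains a nondegenerate (hence infinite)
component or at least `s i` components.

Given such `g`, let `n` count the indices with `s i > 1` whose fiber contains a nondegenerate
component. Then `K` has at least `n` nondegenerate components, and at least
`n + Σ_{i not counted} s i` components; by monotonicity of `k ↦ s (i_k)` this sum is at least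
`n + Σ_{k < |I| - n} s (i_k)`. Conversely, if `t(K) ≥ t_{s,n}` one serves the `n` largest
indices by nondegenerate components and gives each remaining `i_k` its own `s (i_k)` components.
Finally, passing from `n` to `n + 1 ≤ n(s)` trades `s (i_k) > 1` for `1`, so the first coordinate
of `t_{s,n}` strictly decreases while the second increases: `R_s` is an antichain.
-/

open Function Finset

lemma Finset.sum_le_sum_of_card_eq {ι : Type*} [DecidableEq ι] {f : ι → ℕ} {L B : Finset ι}
    (hcard : #L = #B) (h : ∀ x ∈ L \ B, ∀ y ∈ B \ L, f x ≤ f y) :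
    ∑ x ∈ L, f x ≤ ∑ x ∈ B, f x := by
  calc ∑ x ∈ L, f x ≤ ∑ x ∈ L ∩ B, f x + #(L \ B) • (L \ B).sup f := by
        rw [← sum_inter_add_sum_sdiff L B]
        gcongr
        exact sum_le_card_nsmul _ _ _ fun x hx => le_sup hx
    _ = ∑ x ∈ B ∩ L, f x + #(B \ L) • (L \ B).sup f := by
        rw [inter_comm, card_sdiff_comm hcard]
    _ ≤ ∑ x ∈ B, f x := by
        rw [← sum_inter_add_sum_sdiff B L]
        gcongr
        exact card_nsmul_le_sum _ _ _ fun y hy => Finset.sup_le fun x hx => h x hx y hy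

lemma Fin.sum_filter_val_lt_card_le_sum {N : ℕ} {f : Fin N → ℕ} (hf : Monotone f)
    (B : Finset (Fin N)) :
    ∑ k ∈ univ.filter (fun k : Fin N => (k : ℕ) < #B), f k ≤ ∑ k ∈ B, f k := by
  have hB : #B ≤ N := (card_le_univ B).trans_eq (Fintype.card_fin N)
  refine sum_le_sum_of_card_eq (by rw [Fin.card_filter_val_lt, min_eq_right hB])
    fun x hx y hy => hf ?_
  simp only [Finset.mem_sdiff, Finset.mem_filter, Finset.mem_univ, true_and] at hx hy
  rw [Fin.le_def]
  omega

lemma Fin.filter_val_lt_succ {N m : ℕ} (hm : m < N) :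
    univ.filter (fun k : Fin N => (k : ℕ) < m + 1) =
      insert ⟨m, hm⟩ (univ.filter fun k : Fin N => (k : ℕ) < m) := by
  ext k
  simp only [Finset.mem_filter, Finset.mem_univ, true_and, Finset.mem_insert, Fin.ext_iff]
  omega

section TypeOfDecomposition

variable {I : Type*} {N : ℕ} (e : Fin N ≃ I) {s : I → ℕ}

lemma nS_eq_card_filter : nS s = #{k : Fin N | 1 < s (e k)} := by
  rw [nS, ← Nat.card_congr (e.subtypeEquiv fun _ => Iff.rfl), Nat.card_eq_fintype_card,
    Fintype.card_subtype]

lemma nS_le (e : Fin N ≃ I) : nS s ≤ N := by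
  rw [nS_eq_card_filter e]
  exact (card_filter_le _ _).trans_eq (card_fin N)

lemma one_lt_of_sub_nS_le (hmono : Monotone fun k => s (e k)) {k : Fin N}
    (hk : N - nS s ≤ k) : 1 < s (e k) := by
  have hcard : #{k : Fin N | s (e k) ≤ 1} = N - nS s := by
    have := card_filter_add_card_filter_not (s := univ) fun k : Fin N => 1 < s (e k)
    simp only [card_univ, Fintype.card_fin, not_lt] at this
    rw [nS_eq_card_filter e]
    omega
  have := Fin.lt_card_filter_univ_iff_apply_of_imp (j := k) (fun k => s (e k) ≤ 1)
    fun i j hji hi => (hmono hji).trans hi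
  rw [hcard] at this
  by_contra h
  have := this.2 (not_lt.1 h)
  omega

lemma tsn_fst_succ_lt (hmono : Monotone fun k => s (e k)) {j : ℕ} (hj : j < nS s) :
    (tsn e s (j + 1)).1 < (tsn e s j).1 := by
  have hjN := hj.trans_le (nS_le e)
  have hm : N - (j + 1) < N := by omega
  have hbig : 1 < s (e ⟨N - (j + 1), hm⟩) := one_lt_of_sub_nS_le e hmono (by dsimp only; omega)
  have hsplit : N - j = N - (j + 1) + 1 := by omega
  have hsum := sum_insert (f := fun k => s (e k)) (by simp : (⟨N - (j + 1), hm⟩ : Fin N) ∉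
    univ.filter fun k : Fin N => (k : ℕ) < N - (j + 1))
  rw [← Fin.filter_val_lt_succ hm, ← hsplit] at hsum
  simp only [tsn]
  omega

lemma isAntichain_tsn (hmono : Monotone fun k => s (e k)) :
    IsAntichain tle {o : Option (ℕ × ℕ) | ∃ n ≤ nS s, o = some (tsn e s n)} := by
  have hanti : StrictAntiOn (fun n => (tsn e s n).1) (Set.Iic (nS s)) :=
    strictAntiOn_Iic_of_succ_lt fun j hj => tsn_fst_succ_lt e hmono hj
  rintro _ ⟨a, ha, rfl⟩ _ ⟨b, hb, rfl⟩ hab hle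
  rcases hle with ⟨h₁, h₂⟩ | ⟨-, hfst, hsnd⟩
  · exact hab (by rw [h₁, h₂])
  · change a ≤ b at hsnd
    have hlt : a < b := lt_of_le_of_ne hsnd fun h => hab (by rw [h])
    exact (hanti ha hb hlt).not_ge hfst

end TypeOfDecomposition

section Assignment

variable {C I : Type*} {N : ℕ} (e : Fin N ≃ I) {s : I → ℕ} {D : Set C}

/-- Read with `D` the nondegenerate components of a space, which are infinite, this says that
the union of the components in the `i`-th fiber of `g` has at least `s i` points. -/
def FibersLarge (D : Set C) (s : I → ℕ) (g : C → I) : Prop :=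
  ∀ i, (g ⁻¹' {i} ∩ D).Nonempty ∨ (s i : ℕ∞) ≤ (g ⁻¹' {i}).encard

lemma tsn_fst_pos_iff (hs : ∀ i, 0 < s i) {n : ℕ} (hn : n ≤ N) :
    0 < (tsn e s n).1 ↔ 0 < N := by
  refine ⟨fun h => Nat.pos_of_ne_zero fun hN => ?_, fun hN => ?_⟩
  · subst hN
    obtain rfl : n = 0 := by omega
    simp [tsn] at h
  · rcases hn.lt_or_eq with hlt | rfl
    · have hmem : (⟨0, hN⟩ : Fin N) ∈ univ.filter fun k : Fin N => (k : ℕ) < N - n := by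
        simp only [Finset.mem_filter, Finset.mem_univ, true_and]
        omega
      show 0 < n + _
      exact ((hs _).trans_le (single_le_sum (f := fun k => s (e k)) (fun _ _ => Nat.zero_le _)
        hmem)).trans_le (Nat.le_add_left _ _)
    · exact hN.trans_le (Nat.le_add_right _ _)

lemma tle_tsn_some_iff (hs : ∀ i, 0 < s i) {n : ℕ} (hn : n ≤ N) {m d : ℕ} :
    tle (some (tsn e s n)) (some (m, d)) ↔
      (N = 0 ∧ m = 0 ∧ d = 0) ∨ (0 < N ∧ (tsn e s n).1 ≤ m ∧ n ≤ d) := by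
  have hpos := tsn_fst_pos_iff e hs hn
  simp only [tle, tsn, Prod.mk.injEq] at hpos ⊢
  constructor <;> intro h <;> omega

lemma FibersLarge.card_add_sum_compl_le [Finite C] {g : C → I} (hg : FibersLarge D s g)
    (A : Finset (Fin N)) (hA : ∀ k ∈ A, (g ⁻¹' {e k}).Nonempty)
    (hAc : ∀ k ∉ A, (g ⁻¹' {e k} ∩ D).Nonempty → s (e k) ≤ 1) :
    #A + ∑ k ∈ Aᶜ, s (e k) ≤ Nat.card C := by
  classical
  have := Fintype.ofFinite C
  have hencard : ∀ k, (g ⁻¹' {e k}).encard = #{c | e.symm (g c) = k} := by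
    intro k
    rw [← encard_coe_eq_coe_finsetCard]
    congr 1
    ext c
    simp [Equiv.eq_symm_apply, eq_comm]
  have hone : ∀ k, (g ⁻¹' {e k}).Nonempty → 1 ≤ #{c | e.symm (g c) = k} := fun k h => by
    rw [← Nat.cast_le (α := ℕ∞), ← hencard, Nat.cast_one]
    exact Set.one_le_encard_iff_nonempty.2 h
  have hcard : Nat.card C = ∑ k, #{c | e.symm (g c) = k} := by
    rw [Nat.card_eq_fintype_card, ← card_univ]
    exact card_eq_sum_card_fiberwise fun _ _ => Finset.mem_univ _
  rw [hcard, ← sum_add_sum_compl A, card_eq_sum_ones]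
  gcongr with k hk k hk
  · exact hone k (hA k hk)
  · rcases hg (e k) with hD | hle
    · exact (hAc k (Finset.mem_compl.1 hk) hD).trans (hone k hD.left)
    · exact_mod_cast hencard k ▸ hle

lemma FibersLarge.exists_tle [Finite C] (hs : ∀ i, 0 < s i) (hmono : Monotone fun k => s (e k))
    {g : C → I} (hg : FibersLarge D s g) :
    ∃ n ≤ nS s, tle (some (tsn e s n)) (some (Nat.card C, Nat.card D)) := by
  classical
  have := Fintype.ofFinite C
  set A : Finset (Fin N) := {k | 1 < s (e k) ∧ (g ⁻¹' {e k} ∩ D).Nonempty}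
  have hA : #A ≤ nS s := by
    rw [nS_eq_card_filter e]
    exact card_le_card fun k hk => by
      simp only [A, Finset.mem_filter, Finset.mem_univ, true_and] at hk ⊢
      exact hk.1
  have hAD : #A ≤ Nat.card D := by
    calc #A ≤ #(D.toFinset.image (e.symm ∘ g)) := card_le_card fun k hk => by
          obtain ⟨c, hc, hcD⟩ := (Finset.mem_filter.1 hk).2.2
          exact Finset.mem_image.2 ⟨c, Set.mem_toFinset.2 hcD, by simp_all⟩
      _ ≤ Nat.card D := card_image_le.trans_eq (Nat.card_eq_card_toFinset D).symm
  have hsum :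
      #A + ∑ k ∈ univ.filter (fun k : Fin N => (k : ℕ) < N - #A), s (e k) ≤ Nat.card C :=
    calc _ ≤ #A + ∑ k ∈ Aᶜ, s (e k) := by
          simpa [card_compl] using Fin.sum_filter_val_lt_card_le_sum hmono Aᶜ
      _ ≤ Nat.card C := hg.card_add_sum_compl_le e A
          (fun k hk => (Finset.mem_filter.1 hk).2.2.left)
          (fun k hk hD => not_lt.1 fun h => hk (Finset.mem_filter.2 ⟨Finset.mem_univ _, h, hD⟩))
  refine ⟨#A, hA, (tle_tsn_some_iff e hs (hA.trans (nS_le e))).2 ?_⟩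
  rcases Nat.eq_zero_or_pos N with rfl | hN
  · have : IsEmpty C := ⟨fun c => (e.symm (g c)).elim0⟩
    exact Or.inl ⟨rfl, Nat.card_of_isEmpty, Nat.card_of_isEmpty⟩
  · exact Or.inr ⟨hN, hsum, hAD⟩

end Assignment

section Construction

variable {C I : Type*} {N : ℕ} (e : Fin N ≃ I) {s : I → ℕ} {D : Set C}

lemma exists_injective_sumElim_mem {α β : Type*} [Finite α] [Finite β] [Finite C]
    (hα : Nat.card α ≤ Nat.card D) (hαβ : Nat.card α + Nat.card β ≤ Nat.card C) :
    ∃ φ : α ⊕ β → C, Injective φ ∧ ∀ a, φ (.inl a) ∈ D := by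
  classical
  have := Fintype.ofFinite α; have := Fintype.ofFinite β; have := Fintype.ofFinite C
  obtain ⟨a⟩ : Nonempty (α ↪ D) := by
    apply Function.Embedding.nonempty_of_card_le
    simpa only [Nat.card_eq_fintype_card] using hα
  have ha : Injective fun x => (a x : C) := Subtype.val_injective.comp a.injective
  obtain ⟨b⟩ : Nonempty (β ↪ ↥(Set.range fun x => (a x : C))ᶜ) := by
    apply Function.Embedding.nonempty_of_card_le
    have := Set.ncard_add_ncard_compl (Set.range fun x => (a x : C))
    rw [← Nat.card_coe_set_eq, ← Nat.card_coe_set_eq, Nat.card_range_of_injective ha] at this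
    simp only [← Nat.card_eq_fintype_card]
    omega
  exact ⟨Sum.elim (fun x => a x) (fun y => b y),
    ha.sumElim (Subtype.val_injective.comp b.injective) fun x y h => (b y).2 (h ▸ ⟨x, rfl⟩),
    fun x => (a x).2⟩

/-- Each index `e k` with `m ≤ k` receives the component `φ (.inl k)` from `D`; each `e k` with
`k < m` receives the `s (e k)` components `φ (.inr ⟨k, t⟩)`. -/
lemma exists_fibersLarge_of_injective [Nonempty I] {m : ℕ}
    (φ : {k : Fin N // ¬ (k : ℕ) < m} ⊕
      (Σ k : {k : Fin N // (k : ℕ) < m}, Fin (s (e k))) → C)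
    (hφ : Injective φ) (hD : ∀ k, φ (.inl k) ∈ D) : ∃ g : C → I, FibersLarge D s g := by
  let label : _ → I := Sum.elim (fun k : {k : Fin N // ¬ (k : ℕ) < m} => e k)
    (fun p : Σ k : {k : Fin N // (k : ℕ) < m}, Fin (s (e k)) => e p.1)
  refine ⟨extend φ label fun _ => Classical.arbitrary I, fun i => ?_⟩
  obtain ⟨k, rfl⟩ := e.surjective i
  by_cases hk : (k : ℕ) < m
  · right
    let ψ : Fin (s (e k)) → C := fun t => φ (.inr ⟨⟨k, hk⟩, t⟩)
    have hψ : Injective ψ := fun t t' h => by simpa [ψ] using hφ h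
    calc (s (e k) : ℕ∞) ≤ (Set.range ψ).encard := by simpa using hψ.encard_range
      _ ≤ _ := Set.encard_mono <| Set.range_subset_iff.2 fun t => by
          simp [ψ, hφ.extend_apply, label]
  · left
    exact ⟨φ (.inl ⟨k, hk⟩), by simp [hφ.extend_apply, label], hD _⟩

lemma exists_fibersLarge_of_tle [Finite C] (hs : ∀ i, 0 < s i) {n : ℕ} (hn : n ≤ nS s)
    (h : tle (some (tsn e s n)) (some (Nat.card C, Nat.card D))) :
    ∃ g : C → I, FibersLarge D s g := by
  rcases (tle_tsn_some_iff e hs (hn.trans (nS_le e))).1 h with ⟨rfl, hC, -⟩ | ⟨hN, hC, hD⟩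
  · have : IsEmpty C := Finite.card_eq_zero_iff.1 hC
    exact ⟨isEmptyElim, fun i => (e.symm i).elim0⟩
  have : Nonempty I := ⟨e ⟨0, hN⟩⟩
  have hhigh : Nat.card {k : Fin N // ¬ (k : ℕ) < N - n} = n := by
    rw [Nat.card_eq_fintype_card, Fintype.card_subtype_compl, Fintype.card_subtype,
      Fin.card_filter_val_lt, Fintype.card_fin]
    have := hn.trans (nS_le e)
    omega
  have hcard : Nat.card {k : Fin N // ¬ (k : ℕ) < N - n} +
      Nat.card (Σ k : {k : Fin N // (k : ℕ) < N - n}, Fin (s (e k))) ≤ Nat.card C := by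
    rw [hhigh, Nat.card_sigma, ← sum_subtype (univ.filter fun k : Fin N => (k : ℕ) < N - n)
      (by simp) fun k => Nat.card (Fin (s (e k)))]
    simpa [tsn] using hC
  obtain ⟨φ, hφ, hφD⟩ := exists_injective_sumElim_mem (hhigh.trans_le hD) hcard
  exact exists_fibersLarge_of_injective e φ hφ hφD

end Construction

lemma exists_fibersLarge_iff_of_infinite {C I : Type*} [Infinite C] {N : ℕ} (e : Fin N ≃ I)
    {s : I → ℕ} {D : Set C} : (∃ g : C → I, FibersLarge D s g) ↔ 0 < N := by
  refine ⟨fun ⟨g, _⟩ => (e.symm (g (Classical.arbitrary C))).pos, fun hN => ?_⟩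
  have : Nonempty I := ⟨e ⟨0, hN⟩⟩
  have : IsEmpty {k : Fin N // ¬ (k : ℕ) < N} := ⟨fun k => k.2 k.1.2⟩
  let b := ((Fintype.equivFin _).toEmbedding.trans Fin.valEmbedding).trans
    (Infinite.natEmbedding C) (α := Σ k : {k : Fin N // (k : ℕ) < N}, Fin (s (e k)))
  exact exists_fibersLarge_of_injective e (Sum.elim isEmptyElim b)
    (injective_of_subsingleton _ |>.sumElim b.injective fun x => isEmptyElim x)
    fun x => isEmptyElim x

section Components

variable {K : Type*} [TopologicalSpace K]

def nondegenerateComponents (K : Type*) [TopologicalSpace K] : Set (ConnectedComponents K) :=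
  {c | ¬ ({x : K | ConnectedComponents.mk x = c} : Set K).Subsingleton}

lemma typeOf_of_finite [Finite (ConnectedComponents K)] :
    typeOf K = some (Nat.card (ConnectedComponents K), Nat.card (nondegenerateComponents K)) := by
  rw [typeOf, if_pos ‹_›]
  rfl

lemma typeOf_of_infinite [Infinite (ConnectedComponents K)] : typeOf K = none := by
  rw [typeOf, if_neg (not_finite_iff_infinite.2 ‹_›)]

lemma natCast_le_encard_preimage_mk_iff [T1Space K] (T : Set (ConnectedComponents K)) (m : ℕ) :
    (m : ℕ∞) ≤ (ConnectedComponents.mk ⁻¹' T).encard ↔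
      (T ∩ nondegenerateComponents K).Nonempty ∨ (m : ℕ∞) ≤ T.encard := by
  by_cases hT : (T ∩ nondegenerateComponents K).Nonempty
  · obtain ⟨c, hcT, hc⟩ := hT
    obtain ⟨x, rfl⟩ := ConnectedComponents.surjective_coe c
    have hfiber : {y : K | ConnectedComponents.mk y = ConnectedComponents.mk x} =
        connectedComponent x := Set.ext fun y => ConnectedComponents.coe_eq_coe'
    have hinf : (connectedComponent x).Infinite :=
      isPreconnected_connectedComponent.infinite_of_nontrivial
        (hfiber ▸ Set.not_subsingleton_iff.1 hc)
    have hsub : connectedComponent x ⊆ ConnectedComponents.mk ⁻¹' T := fun y hy => by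
      rw [← hfiber] at hy
      rwa [Set.mem_preimage, hy]
    rw [(hinf.mono hsub).encard_eq]
    exact iff_of_true le_top (Or.inl ⟨_, hcT, hc⟩)
  · have hinj : InjOn ConnectedComponents.mk (ConnectedComponents.mk ⁻¹' T) :=
      fun x hx y _ hxy => by
        by_contra hne
        refine hT ⟨_, hx, fun hsub => hne (hsub rfl hxy.symm)⟩
    rw [← hinj.encard_image, Set.image_preimage_eq T ConnectedComponents.surjective_coe]
    simp [hT]

end Components

lemma exists_isLocallyConstant_eqOn {X I : Type*} [TopologicalSpace X] [CompactSpace X]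
    [T2Space X] [TotallyDisconnectedSpace X] {F : Set X} (hF : F.Finite) (φ : X → I) :
    ∃ g : X → I, IsLocallyConstant g ∧ EqOn g φ F := by
  rcases isEmpty_or_nonempty X with hX | ⟨⟨x₀⟩⟩
  · exact ⟨φ, .of_discrete φ, fun x => isEmptyElim x⟩
  have hsep :
      ∀ p : X × X, ∃ Q : DiscreteQuotient X, Q.proj p.1 = Q.proj p.2 → p.1 = p.2 := by
    intro p
    by_contra! h
    exact (h ⊤).2 (DiscreteQuotient.eq_of_forall_proj_eq fun Q => (h Q).1)
  choose Q hQ using hsep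
  let Q₀ := (hF.toFinset ×ˢ hF.toFinset).inf Q
  have hinj : InjOn Q₀.proj F := fun x hx y hy hxy => by
    have hle : Q₀ ≤ Q (x, y) := Finset.inf_le (by simp [hx, hy])
    exact hQ (x, y) (by rw [← DiscreteQuotient.ofLE_proj hle, hxy, DiscreteQuotient.ofLE_proj])
  refine ⟨extend (F.domRestrict Q₀.proj) (F.domRestrict φ) (fun _ => φ x₀) ∘ Q₀.proj,
    Q₀.proj_isLocallyConstant.comp _, fun x hx => ?_⟩
  exact hinj.injective.extend_apply _ _ ⟨x, hx⟩

lemma Set.exists_finite_subset_natCast_le_encard_preimage {X Y : Type*} (π : X → Y) {T : Set Y}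
    {m : ℕ} (h : (m : ℕ∞) ≤ (π ⁻¹' T).encard) :
    ∃ F ⊆ T, F.Finite ∧ (m : ℕ∞) ≤ (π ⁻¹' F).encard := by
  obtain ⟨S, hST, hS⟩ := Set.exists_subset_encard_eq h
  exact ⟨π '' S, Set.image_subset_iff.2 hST, (Set.finite_of_encard_eq_coe hS).image π,
    hS ▸ Set.encard_mono (Set.subset_preimage_image π S)⟩

section Decomposition

variable {K I : Type*} [TopologicalSpace K] {s : I → ℕ}

lemma hasDecomp_of_isLocallyConstant {f : K → I} (hf : IsLocallyConstant f)
    (h : ∀ i, (s i : ℕ∞) ≤ (f ⁻¹' {i}).encard) : HasDecomp K s :=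
  ⟨fun i => f ⁻¹' {i}, hf.isClopen_fiber,
    fun _ _ hij => Disjoint.preimage f (Set.disjoint_singleton.2 hij),
    Set.iUnion_eq_univ_iff.2 fun x => ⟨f x, rfl⟩, h⟩

lemma hasDecomp_iff_exists_le_encard [CompactSpace K] [T2Space K] [Finite I] :
    HasDecomp K s ↔ ∃ g : ConnectedComponents K → I,
      ∀ i, (s i : ℕ∞) ≤ (ConnectedComponents.mk ⁻¹' (g ⁻¹' {i})).encard := by
  constructor
  · rintro ⟨P, hclopen, hdisj, hcover, hcard⟩
    choose idx hidx using Set.iUnion_eq_univ_iff.1 hcover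
    refine ⟨fun c => idx (surjInv ConnectedComponents.surjective_coe c),
      fun i => (hcard i).trans (Set.encard_mono fun x hx => ?_)⟩
    set y := surjInv ConnectedComponents.surjective_coe (ConnectedComponents.mk x)
    have hy : y ∈ P i := (hclopen i).connectedComponent_subset hx
      (ConnectedComponents.coe_eq_coe'.1 (surjInv_eq _ _))
    by_contra hne
    exact Set.disjoint_left.1 (hdisj hne) (hidx y) hy
  · rintro ⟨g, hg⟩
    choose F hFg hFfin hFcard using fun i =>
      Set.exists_finite_subset_natCast_le_encard_preimage ConnectedComponents.mk (hg i)
    obtain ⟨g', hg', hgg'⟩ := exists_isLocallyConstant_eqOn (Set.finite_iUnion hFfin) g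
    refine hasDecomp_of_isLocallyConstant (hg'.comp_continuous ConnectedComponents.continuous_coe)
      fun i => (hFcard i).trans (Set.encard_mono fun x hx => ?_)
    simpa [hgg' (Set.mem_iUnion.2 ⟨i, hx⟩)] using hFg i hx

lemma hasDecomp_iff_exists_fibersLarge [CompactSpace K] [T2Space K] [Finite I] :
    HasDecomp K s ↔
      ∃ g : ConnectedComponents K → I, FibersLarge (nondegenerateComponents K) s g := by
  simp only [hasDecomp_iff_exists_le_encard, FibersLarge, natCast_le_encard_preimage_mk_iff]

end Decomposition

theorem stmt16 {I : Type*} {N : ℕ} (e : Fin N ≃ I) (s : I → ℕ) (hs : ∀ i, 0 < s i)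
    (hmono : Monotone fun k => s (e k)) :
    (∀ (K : Type u) [TopologicalSpace K] [CompactSpace K] [MetrizableSpace K],
        HasDecomp K s ↔ ∃ n ≤ nS s, tle (some (tsn e s n)) (typeOf K)) ∧
    IsAntichain tle {o : Option (ℕ × ℕ) | ∃ n ≤ nS s, o = some (tsn e s n)} := by
  refine ⟨fun K _ _ _ => ?_, isAntichain_tsn e hmono⟩
  have := Finite.of_equiv _ e
  rw [hasDecomp_iff_exists_fibersLarge]
  rcases finite_or_infinite (ConnectedComponents K) with hC | hC
  · rw [typeOf_of_finite]
    exact ⟨fun ⟨g, hg⟩ => hg.exists_tle e hs hmono,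
      fun ⟨n, hn, h⟩ => exists_fibersLarge_of_tle e hs hn h⟩
  · rw [typeOf_of_infinite, exists_fibersLarge_iff_of_infinite e]
    exact ⟨fun hN => ⟨0, Nat.zero_le _, (tsn_fst_pos_iff e hs (Nat.zero_le N)).2 hN⟩,
      fun ⟨n, hn, h⟩ => (tsn_fst_pos_iff e hs (hn.trans (nS_le e))).1 h⟩
end
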